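/- arXiv:1409.4259 — 3 statements merged into one kernel-verified Lean document; each statement's English description precedes it below -/
import Mathlib

section
/- Let k ≥ 4 be an integer, let v = σ(k−1) and λ = 1 − (1−v)/k, where σ(d)^{-1} = 2^{d−1} for d ≤ 8 and σ(d)^{-1} = 4(d²−3d+3) for d ≥ 9. Then 1 − (1−v)/(2λ) > λ^k. -/
noncomputable def sigmaInv (d : ℕ) : ℝ :=
  if d ≤ 8 then 2 ^ (d - 1) else 4 * ((d : ℝ) ^ 2 - 3 * d + 3)

noncomputable def sigmaWeyl (d : ℕ) : ℝ := (sigmaInv d)⁻¹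

theorem stmt_7 (k : ℕ) (hk : 4 ≤ k) (v lam : ℝ)
    (hv : v = sigmaWeyl (k - 1)) (hlam : lam = 1 - (1 - v) / k) :
    1 - (1 - v) / (2 * lam) > lam ^ k := by
  rcases le_or_gt k 8 with h8 | h9
  · interval_cases k <;>
      (norm_num [sigmaWeyl, sigmaInv] at hv; subst hv; subst hlam; norm_num)
  · -- k ≥ 9
    have hK : (9 : ℝ) ≤ (k : ℝ) := by exact_mod_cast h9
    have hKpos : (0 : ℝ) < (k : ℝ) := by linarith
    -- bounds on v
    have hsig : (128 : ℝ) ≤ sigmaInv (k - 1) := by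
      unfold sigmaInv
      by_cases hd : k - 1 ≤ 8
      · have hk9 : k = 9 := by omega
        subst hk9
        norm_num
      · rw [if_neg hd]
        have hd9 : (9 : ℝ) ≤ ((k - 1 : ℕ) : ℝ) := by
          have : 9 ≤ k - 1 := by omega
          exact_mod_cast this
        nlinarith [hd9]
    have hvpos : 0 < v := by
      rw [hv, sigmaWeyl]
      exact inv_pos.mpr (by linarith)
    have hvle : v ≤ 1 / 128 := by
      rw [hv, sigmaWeyl]
      rw [inv_le_comm₀ (by linarith) (by norm_num)]
      simpa using hsig
    have hv1 : v < 1 := by linarith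
    -- bounds on lam
    have hlam_lb : (8 : ℝ) / 9 ≤ lam := by
      rw [hlam]
      have h1 : (1 - v) / (k : ℝ) ≤ 1 / 9 := by
        apply div_le_div₀ (by norm_num) (by linarith) (by norm_num) hK
      linarith
    have hlampos : 0 < lam := by linarith
    -- LHS ≥ 7/16
    have hLHS : (7 : ℝ) / 16 ≤ 1 - (1 - v) / (2 * lam) := by
      have h1 : (1 - v) / (2 * lam) ≤ 9 / 16 := by
        rw [div_le_iff₀ (by linarith)]
        linarith
      linarith
    -- lam^k ≤ exp (v - 1)
    have hexp : lam ^ k ≤ Real.exp (v - 1) := by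
      have h1 : lam ≤ Real.exp ((v - 1) / k) := by
        have := Real.add_one_le_exp ((v - 1) / (k : ℝ))
        have heq : lam = (v - 1) / (k : ℝ) + 1 := by
          rw [hlam]; ring
        linarith
      calc lam ^ k ≤ Real.exp ((v - 1) / k) ^ k :=
            pow_le_pow_left₀ (le_of_lt hlampos) h1 k
        _ = Real.exp ((k : ℝ) * ((v - 1) / k)) := (Real.exp_nat_mul _ k).symm
        _ = Real.exp (v - 1) := by
            congr 1
            field_simp
    -- exp (v-1) < 7/16
    have hsmall : Real.exp (v - 1) < 7 / 16 := by
      have h1 : Real.exp (v - 1) ≤ Real.exp (-(127 / 128)) :=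
        Real.exp_le_exp.mpr (by linarith)
      have h2 : (511 : ℝ) / 384 ≤ Real.exp (127 / 384) := by
        have := Real.add_one_le_exp ((127 : ℝ) / 384)
        linarith
      have h3 : (16 : ℝ) / 7 < Real.exp (127 / 128) := by
        have heq : Real.exp ((127 : ℝ) / 128) =
            Real.exp (127 / 384) * Real.exp (127 / 384) * Real.exp (127 / 384) := by
          rw [← Real.exp_add, ← Real.exp_add]; norm_num
        have hepos : (0 : ℝ) < Real.exp (127 / 384) := Real.exp_pos _
        nlinarith [h2, hepos]
      have h4 : Real.exp (-(127 / 128)) < 7 / 16 := by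
        rw [Real.exp_neg]
        rw [inv_lt_comm₀ (Real.exp_pos _) (by norm_num)]
        · linarith [h3]
      linarith
    linarith
end

section
/- Let k ≥ 2 and t ≥ 1 be integers, let h_1, ..., h_t be real polynomials of degree k with positive leading coefficients, let η > 0 and c > 1. With λ = 1 − 1/k and λ_j = λ^{j−1}, the number T of integer tuples (x_1,...,x_t,y_1,...,y_t) with P^{λ_j} < x_j, y_j ≤ cP^{λ_j} for all j and |Σ_{j≤t}(h_j(x_j) − h_j(y_j))| < η satisfies T ≪_{η,c,h} P^{λ_1 + ... + λ_t}. -/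
/-!
Induct on `t`, proving the bound uniformly in a real shift `a` added inside the absolute value.
Split off the first pair of coordinates `x₁, y₁ ∈ (P, cP]`. The remaining coordinates lie in the
ranges attached to `P ^ λ`, so their polynomial values are `O((P ^ λ) ^ k) = O(P ^ (k - 1))`, and
therefore `|a + h₁ x₁ - h₁ y₁| ≪ P ^ (k - 1)`. Since `h₁' ≫ P ^ (k - 1)` on `[P, ∞)`, the mean value
theorem confines `x₁` to an interval of bounded length once `y₁` is fixed: there are `O(P)` pairs.
For each pair, the induction hypothesis at `P ^ λ` with shift `a + h₁ x₁ - h₁ y₁` counts the rest,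
and `P * (P ^ λ) ^ (λ₁ + ⋯ + λₜ₋₁) = P ^ (λ₁ + ⋯ + λₜ)`.
-/

open Polynomial Finset Filter

namespace Polynomial

theorem exists_abs_eval_le_mul_pow (p : ℝ[X]) :
    ∃ A ≥ 0, ∀ x : ℝ, 1 ≤ x → |p.eval x| ≤ A * x ^ p.natDegree := by
  refine ⟨∑ i ∈ range (p.natDegree + 1), |p.coeff i|, by positivity, fun x hx => ?_⟩
  rw [eval_eq_sum_range, sum_mul]
  refine (abs_sum_le_sum_abs _ _).trans (sum_le_sum fun i hi => ?_)
  rw [abs_mul, abs_pow, abs_of_nonneg (by linarith : (0:ℝ) ≤ x)]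
  exact mul_le_mul_of_nonneg_left (pow_le_pow_right₀ hx (Nat.lt_succ_iff.mp (mem_range.mp hi)))
    (abs_nonneg _)

theorem eventually_leadingCoeff_div_two_mul_pow_le_eval (q : ℝ[X]) (hq : 0 ≤ q.leadingCoeff) :
    ∀ᶠ x in atTop, q.leadingCoeff / 2 * x ^ q.natDegree ≤ q.eval x := by
  filter_upwards [q.isEquivalent_atTop_lead.isLittleO.def (half_pos one_pos),
    eventually_ge_atTop 0] with x hx hx0
  rw [Pi.sub_apply, Real.norm_eq_abs, Real.norm_eq_abs, abs_le,
    abs_of_nonneg (by positivity : 0 ≤ q.leadingCoeff * x ^ q.natDegree)] at hx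
  linarith [hx.1]

theorem exists_pos_mul_abs_sub_le_abs_eval_sub (p : ℝ[X]) (hp : 0 < p.leadingCoeff)
    (hdeg : p.natDegree ≠ 0) :
    ∃ δ > 0, ∀ᶠ P in atTop, ∀ u v : ℝ, P ≤ u → P ≤ v →
      δ * P ^ (p.natDegree - 1) * |u - v| ≤ |p.eval u - p.eval v| := by
  have hlead : 0 < p.derivative.leadingCoeff := by
    rw [leadingCoeff_derivative]
    exact mul_pos hp (by exact_mod_cast Nat.pos_of_ne_zero hdeg)
  refine ⟨p.derivative.leadingCoeff / 2, by positivity, ?_⟩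
  obtain ⟨X, hX⟩ :=
    eventually_atTop.1 (p.derivative.eventually_leadingCoeff_div_two_mul_pow_le_eval hlead.le)
  filter_upwards [eventually_ge_atTop (max X 0)] with P hP
  have hgrowth : ∀ u ∈ Set.Ici P, ∀ v ∈ Set.Ici P, u ≤ v →
      p.derivative.leadingCoeff / 2 * P ^ (p.natDegree - 1) * (v - u) ≤ p.eval v - p.eval u := by
    refine (convex_Ici P).mul_sub_le_image_sub_of_le_deriv p.continuous.continuousOn
      p.differentiable.differentiableOn fun x hx => ?_
    rw [interior_Ici] at hx
    rw [Polynomial.deriv, ← natDegree_derivative]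
    refine le_trans ?_ (hX x (by linarith [le_max_left X 0, Set.mem_Ioi.1 hx]))
    gcongr
    · linarith [le_max_right X 0]
    · exact (Set.mem_Ioi.1 hx).le
  intro u v hu hv
  rcases le_total u v with huv | hvu
  · rw [abs_sub_comm u, abs_sub_comm (p.eval u), abs_of_nonneg (sub_nonneg.2 huv)]
    exact (hgrowth u hu v hv huv).trans (le_abs_self _)
  · rw [abs_of_nonneg (sub_nonneg.2 hvu)]
    exact (hgrowth v hv u hu hvu).trans (le_abs_self _)

end Polynomial

theorem Finset.card_le_of_forall_abs_sub_le (s : Finset ℤ) (m : ℕ)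
    (hs : ∀ x ∈ s, ∀ y ∈ s, |x - y| ≤ m) : #s ≤ 2 * m + 1 := by
  rcases s.eq_empty_or_nonempty with rfl | ⟨x₀, hx₀⟩
  · simp
  have hsub : s ⊆ Icc (x₀ - m) (x₀ + m) := fun x hx => by
    rw [mem_Icc]
    constructor <;> linarith [abs_le.1 (hs x hx x₀ hx₀)]
  calc #s ≤ #(Icc (x₀ - m) (x₀ + m)) := card_le_card hsub
    _ = 2 * m + 1 := by rw [Int.card_Icc]; omega

theorem Finset.card_le_card_mul_of_card_fiber_le {α β : Type*} [DecidableEq β] {s : Finset α}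
    {t : Finset β} {f : α → β} (hf : ∀ a ∈ s, f a ∈ t) {n : ℝ}
    (hn : ∀ b ∈ t, (#{a ∈ s | f a = b} : ℝ) ≤ n) : (#s : ℝ) ≤ #t * n := by
  calc (#s : ℝ) = ∑ b ∈ t, (#{a ∈ s | f a = b} : ℝ) := by
        exact_mod_cast card_eq_sum_card_fiberwise hf
    _ ≤ ∑ _b ∈ t, n := sum_le_sum hn
    _ = #t * n := by rw [sum_const, nsmul_eq_mul]

theorem card_filter_abs_add_sub_le_le_mul_card {f : ℤ → ℝ} {B : Finset ℤ} {a R : ℝ} {m : ℕ}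
    (hsep : ∀ x ∈ B, ∀ y ∈ B, |f x - f y| ≤ 2 * R → |x - y| ≤ m) :
    #{q ∈ B ×ˢ B | |a + (f q.1 - f q.2)| ≤ R} ≤ (2 * m + 1) * #B := by
  classical
  refine card_le_mul_card_image_of_maps_to (f := Prod.snd)
    (fun q hq => (mem_product.1 (mem_filter.1 hq).1).2) _ fun y _ => ?_
  rw [← card_image_of_injOn (f := Prod.fst) fun q hq q' hq' h =>
    Prod.ext h ((mem_filter.1 hq).2.trans (mem_filter.1 hq').2.symm)]
  refine card_le_of_forall_abs_sub_le _ _ ?_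
  simp only [mem_image, mem_filter, mem_product, Prod.exists]
  rintro _ ⟨x, _, ⟨⟨⟨hx, -⟩, hxR⟩, rfl⟩, rfl⟩ _ ⟨x', _, ⟨⟨⟨hx', -⟩, hxR'⟩, rfl⟩, rfl⟩
  refine hsep x hx x' hx' ?_
  rw [abs_le] at hxR hxR' ⊢
  constructor <;> linarith

noncomputable def intIoc (a b : ℝ) : Finset ℤ := Ioc ⌊a⌋ ⌊b⌋

@[simp]
theorem mem_intIoc {a b : ℝ} {x : ℤ} : x ∈ intIoc a b ↔ a < x ∧ (x : ℝ) ≤ b := by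
  rw [intIoc, mem_Ioc, Int.floor_lt, Int.le_floor]

theorem card_intIoc_le {a b : ℝ} (hab : a ≤ b) : (#(intIoc a b) : ℝ) ≤ b - a + 1 := by
  have hfloor : ⌊a⌋ ≤ ⌊b⌋ := Int.floor_mono hab
  have hcard : ((#(intIoc a b) : ℤ) : ℝ) = ⌊b⌋ - ⌊a⌋ := by
    rw [intIoc, Int.card_Ioc_of_le _ _ hfloor]; push_cast; ring
  push_cast at hcard
  rw [hcard]
  linarith [Int.floor_le b, Int.sub_one_lt_floor a]

def evalDiff {t : ℕ} (h : Fin t → ℝ[X]) (p : (Fin t → ℤ) × (Fin t → ℤ)) : ℝ :=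
  ∑ j, ((h j).eval (p.1 j : ℝ) - (h j).eval (p.2 j : ℝ))

theorem evalDiff_succ {t : ℕ} (h : Fin (t + 1) → ℝ[X])
    (p : (Fin (t + 1) → ℤ) × (Fin (t + 1) → ℤ)) :
    evalDiff h p = ((h 0).eval (p.1 0 : ℝ) - (h 0).eval (p.2 0 : ℝ)) +
      evalDiff (Fin.tail h) (Prod.map Fin.tail Fin.tail p) :=
  Fin.sum_univ_succ _

open scoped Classical in
noncomputable def diagonalTuples {t : ℕ} (h : Fin t → ℝ[X]) (c lam η P a : ℝ) :
    Finset ((Fin t → ℤ) × (Fin t → ℤ)) :=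
  let box := Fintype.piFinset fun j : Fin t => intIoc (P ^ lam ^ (j : ℕ)) (c * P ^ lam ^ (j : ℕ))
  {p ∈ box ×ˢ box | |a + evalDiff h p| < η}

section diagonalTuples

variable {t k : ℕ} {c lam η P a : ℝ}

theorem mem_diagonalTuples {h : Fin t → ℝ[X]} {p : (Fin t → ℤ) × (Fin t → ℤ)} :
    p ∈ diagonalTuples h c lam η P a ↔
      (∀ j : Fin t, (P ^ lam ^ (j : ℕ) < p.1 j ∧ (p.1 j : ℝ) ≤ c * P ^ lam ^ (j : ℕ)) ∧
        (P ^ lam ^ (j : ℕ) < p.2 j ∧ (p.2 j : ℝ) ≤ c * P ^ lam ^ (j : ℕ))) ∧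
      |a + evalDiff h p| < η := by
  simp only [diagonalTuples, mem_filter, mem_product, Fintype.mem_piFinset, mem_intIoc,
    forall_and]

theorem mem_diagonalTuples_succ {h : Fin (t + 1) → ℝ[X]}
    {p : (Fin (t + 1) → ℤ) × (Fin (t + 1) → ℤ)} (hP : 0 ≤ P)
    (hp : p ∈ diagonalTuples h c lam η P a) :
    p.1 0 ∈ intIoc P (c * P) ∧ p.2 0 ∈ intIoc P (c * P) ∧
      Prod.map Fin.tail Fin.tail p ∈ diagonalTuples (Fin.tail h) c lam η (P ^ lam)
        (a + ((h 0).eval (p.1 0 : ℝ) - (h 0).eval (p.2 0 : ℝ))) := by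
  rw [mem_diagonalTuples, evalDiff_succ, ← add_assoc] at hp
  obtain ⟨hbox, hsum⟩ := hp
  have hrpow (j : Fin t) : (P ^ lam) ^ lam ^ (j : ℕ) = P ^ lam ^ ((j.succ : Fin (t + 1)) : ℕ) := by
    rw [← Real.rpow_mul hP, Fin.val_succ, pow_succ']
  refine ⟨?_, ?_, mem_diagonalTuples.2 ⟨fun j => ?_, hsum⟩⟩
  · simpa using (hbox 0).1
  · simpa using (hbox 0).2
  · simpa only [hrpow, Prod.map, Fin.tail] using hbox j.succ

theorem abs_evalDiff_le {h : Fin t → ℝ[X]} {A : Fin t → ℝ} (hA₀ : ∀ j, 0 ≤ A j)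
    (hA : ∀ j, ∀ x : ℝ, 1 ≤ x → |(h j).eval x| ≤ A j * x ^ k) (hc : 0 ≤ c) (hlam₀ : 0 ≤ lam)
    (hlam₁ : lam ≤ 1) (hP : 1 ≤ P) {p : (Fin t → ℤ) × (Fin t → ℤ)}
    (hp : p ∈ diagonalTuples h c lam η P a) :
    |evalDiff h p| ≤ 2 * (∑ j, A j) * (c * P) ^ k := by
  obtain ⟨hbox, -⟩ := mem_diagonalTuples.1 hp
  have hcoord (j : Fin t) (x : ℤ) (hx : P ^ lam ^ (j : ℕ) < x ∧ (x : ℝ) ≤ c * P ^ lam ^ (j : ℕ)) :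
      |(h j).eval (x : ℝ)| ≤ A j * (c * P) ^ k := by
    have hrpow₁ : 1 ≤ P ^ lam ^ (j : ℕ) := Real.one_le_rpow hP (by positivity)
    have hrpow_le : P ^ lam ^ (j : ℕ) ≤ P := by
      simpa using Real.rpow_le_rpow_of_exponent_le hP (pow_le_one₀ hlam₀ hlam₁)
    refine (hA j x (by linarith)).trans (mul_le_mul_of_nonneg_left ?_ (hA₀ j))
    exact pow_le_pow_left₀ (by linarith) (hx.2.trans (by gcongr)) k
  calc |evalDiff h p| ≤ ∑ j, |(h j).eval (p.1 j : ℝ) - (h j).eval (p.2 j : ℝ)| :=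
        abs_sum_le_sum_abs _ _
    _ ≤ ∑ j, 2 * A j * (c * P) ^ k := sum_le_sum fun j _ => by
        linarith [abs_sub (h j |>.eval (p.1 j : ℝ)) ((h j).eval (p.2 j : ℝ)),
          hcoord j _ (hbox j).1, hcoord j _ (hbox j).2]
    _ = 2 * (∑ j, A j) * (c * P) ^ k := by rw [← sum_mul, ← mul_sum]

theorem card_diagonalTuples_succ_le {h : Fin (t + 1) → ℝ[X]} (hP : 0 ≤ P) {M K : ℝ} {m : ℕ}
    (hM : ∀ a' q, q ∈ diagonalTuples (Fin.tail h) c lam η (P ^ lam) a' →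
      |evalDiff (Fin.tail h) q| ≤ M)
    (hK : ∀ a', (#(diagonalTuples (Fin.tail h) c lam η (P ^ lam) a') : ℝ) ≤ K)
    (hsep : ∀ x ∈ intIoc P (c * P), ∀ y ∈ intIoc P (c * P),
      |(h 0).eval (x : ℝ) - (h 0).eval (y : ℝ)| ≤ 2 * (η + M) → |x - y| ≤ m) :
    (#(diagonalTuples h c lam η P a) : ℝ) ≤ #(intIoc P (c * P)) * (2 * m + 1) * K := by
  classical
  set B := intIoc P (c * P)
  set D := {q ∈ B ×ˢ B | |a + ((h 0).eval (q.1 : ℝ) - (h 0).eval (q.2 : ℝ))| ≤ η + M}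
  have hhead : ∀ p ∈ diagonalTuples h c lam η P a, (p.1 0, p.2 0) ∈ D := fun p hp => by
    obtain ⟨hx, hy, htail⟩ := mem_diagonalTuples_succ hP hp
    have hlt := (mem_diagonalTuples.1 htail).2
    have hle := hM _ _ htail
    rw [abs_lt] at hlt
    rw [abs_le] at hle
    exact mem_filter.2 ⟨mem_product.2 ⟨hx, hy⟩, abs_le.2 ⟨by linarith, by linarith⟩⟩
  have hfiber : ∀ q ∈ D, (#{p ∈ diagonalTuples h c lam η P a | (p.1 0, p.2 0) = q} : ℝ) ≤ K := by
    intro q _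
    refine le_trans ?_ (hK (a + ((h 0).eval (q.1 : ℝ) - (h 0).eval (q.2 : ℝ))))
    refine Nat.cast_le.2 (card_le_card_of_injOn (Prod.map Fin.tail Fin.tail) ?_ ?_)
    · intro p hp
      obtain ⟨hpS, rfl⟩ := mem_filter.1 hp
      exact (mem_diagonalTuples_succ hP hpS).2.2
    · intro p hp p' hp' htail
      have hsame := (mem_filter.1 hp).2.trans (mem_filter.1 hp').2.symm
      simp only [Prod.map, Prod.mk.injEq] at hsame htail
      have hcons (u u' : Fin (t + 1) → ℤ) (h₀ : u 0 = u' 0) (ht : Fin.tail u = Fin.tail u') :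
          u = u' := by
        rw [← Fin.cons_self_tail u, ← Fin.cons_self_tail u', h₀, ht]
      exact Prod.ext (hcons _ _ hsame.1 htail.1) (hcons _ _ hsame.2 htail.2)
  have hD : (#D : ℝ) ≤ #B * (2 * m + 1) := by
    rw [mul_comm]
    exact_mod_cast card_filter_abs_add_sub_le_le_mul_card hsep
  have hK₀ : 0 ≤ K := (Nat.cast_nonneg _).trans (hK 0)
  calc (#(diagonalTuples h c lam η P a) : ℝ) ≤ #D * K :=
        card_le_card_mul_of_card_fiber_le hhead hfiber
    _ ≤ #B * (2 * m + 1) * K := by gcongr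

end diagonalTuples

theorem rpow_sum_pow_fin_succ {P : ℝ} (hP : 0 < P) (lam : ℝ) (t : ℕ) :
    P ^ ∑ j : Fin (t + 1), lam ^ (j : ℕ) = P * (P ^ lam) ^ ∑ j : Fin t, lam ^ (j : ℕ) := by
  rw [Fin.sum_univ_succ, ← Real.rpow_mul hP.le, Real.rpow_add hP, mul_sum]
  simp [pow_succ']

theorem rpow_one_sub_inv_pow {k : ℕ} (hk : k ≠ 0) {P : ℝ} (hP : 0 ≤ P) :
    (P ^ (1 - 1 / k : ℝ)) ^ k = P ^ (k - 1) := by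
  have hexp : (1 - 1 / k : ℝ) * k = ((k - 1 : ℕ) : ℝ) := by
    rw [Nat.cast_sub (Nat.one_le_iff_ne_zero.2 hk)]
    field_simp
    ring
  rw [← Real.rpow_natCast (P ^ _), ← Real.rpow_mul hP, hexp, Real.rpow_natCast]

theorem exists_card_diagonalTuples_succ_le {t k : ℕ} {c lam η : ℝ} (hk : 2 ≤ k)
    (hlam : lam = 1 - 1 / k) (hη : 0 < η) (hc : 1 < c) {h : Fin (t + 1) → ℝ[X]}
    (hdeg : ∀ j, (h j).natDegree = k) (hlead : 0 < (h 0).leadingCoeff) {C : ℝ} (hC : 0 < C)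
    (hIH : ∀ᶠ Q in atTop, ∀ a,
      (#(diagonalTuples (Fin.tail h) c lam η Q a) : ℝ) ≤ C * Q ^ ∑ j : Fin t, lam ^ (j : ℕ)) :
    ∃ C' > 0, ∀ᶠ P in atTop, ∀ a,
      (#(diagonalTuples h c lam η P a) : ℝ) ≤ C' * P ^ ∑ j : Fin (t + 1), lam ^ (j : ℕ) := by
  have hk' : (2 : ℝ) ≤ k := by exact_mod_cast hk
  have hlam₀ : 0 < lam := by
    rw [hlam, sub_pos, div_lt_one (by linarith)]; linarith
  have hlam₁ : lam ≤ 1 := by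
    rw [hlam, sub_le_self_iff]; positivity
  obtain ⟨δ, hδ, hgap⟩ :=
    (h 0).exists_pos_mul_abs_sub_le_abs_eval_sub hlead (by rw [hdeg 0]; omega)
  choose A hA₀ hA using fun j => (h j).exists_abs_eval_le_mul_pow
  simp only [hdeg] at hA hgap
  set M := 2 * (∑ j, Fin.tail A j) * c ^ k
  set m := ⌈2 * (η + M) / δ⌉₊
  refine ⟨c * (2 * m + 1) * C, by positivity, ?_⟩
  filter_upwards [eventually_ge_atTop 1, hgap, (tendsto_rpow_atTop hlam₀).eventually hIH]
    with P hP hPgap hPIH a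
  have hN : 1 ≤ P ^ (k - 1) := one_le_pow₀ hP
  have hM : ∀ a' q, q ∈ diagonalTuples (Fin.tail h) c lam η (P ^ lam) a' →
      |evalDiff (Fin.tail h) q| ≤ M * P ^ (k - 1) := fun a' q hq => by
    have := abs_evalDiff_le (A := Fin.tail A) (fun j => hA₀ _) (fun j => hA _) (by linarith)
      hlam₀.le hlam₁ (Real.one_le_rpow hP hlam₀.le) hq
    rwa [mul_pow, hlam, rpow_one_sub_inv_pow (by omega) (by linarith), ← mul_assoc] at this
  have hsep : ∀ x ∈ intIoc P (c * P), ∀ y ∈ intIoc P (c * P),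
      |(h 0).eval (x : ℝ) - (h 0).eval (y : ℝ)| ≤ 2 * (η + M * P ^ (k - 1)) → |x - y| ≤ m := by
    intro x hx y hy hxy
    have hδxy := (hPgap x y (mem_intIoc.1 hx).1.le (mem_intIoc.1 hy).1.le).trans hxy
    have : |(x : ℝ) - y| ≤ 2 * (η + M) / δ := by
      rw [le_div_iff₀ hδ]
      refine le_of_mul_le_mul_right ?_ (zero_lt_one.trans_le hN)
      nlinarith
    exact_mod_cast this.trans (Nat.le_ceil _)
  calc (#(diagonalTuples h c lam η P a) : ℝ)
      ≤ #(intIoc P (c * P)) * (2 * m + 1) * (C * (P ^ lam) ^ ∑ j : Fin t, lam ^ (j : ℕ)) :=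
        card_diagonalTuples_succ_le (by linarith) hM hPIH hsep
    _ ≤ c * P * (2 * m + 1) * (C * (P ^ lam) ^ ∑ j : Fin t, lam ^ (j : ℕ)) := by
        gcongr
        exact (card_intIoc_le (by nlinarith)).trans (by linarith)
    _ = c * (2 * m + 1) * C * P ^ ∑ j : Fin (t + 1), lam ^ (j : ℕ) := by
        rw [rpow_sum_pow_fin_succ (by linarith)]; ring

theorem exists_card_diagonalTuples_le {k : ℕ} {c lam η : ℝ} (hk : 2 ≤ k) (hlam : lam = 1 - 1 / k)
    (hη : 0 < η) (hc : 1 < c) {t : ℕ} (h : Fin t → ℝ[X]) (hdeg : ∀ j, (h j).natDegree = k)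
    (hlead : ∀ j, 0 < (h j).leadingCoeff) :
    ∃ C > 0, ∀ᶠ P in atTop, ∀ a,
      (#(diagonalTuples h c lam η P a) : ℝ) ≤ C * P ^ ∑ j : Fin t, lam ^ (j : ℕ) := by
  induction t with
  | zero =>
    refine ⟨1, one_pos, Eventually.of_forall fun P a => ?_⟩
    simpa using card_le_one_of_subsingleton (diagonalTuples h c lam η P a)
  | succ t ih =>
    obtain ⟨C, hC, hIH⟩ := ih (Fin.tail h) (fun j => hdeg _) (fun j => hlead _)
    exact exists_card_diagonalTuples_succ_le hk hlam hη hc hdeg (hlead 0) hC hIH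

theorem stmt_12_general (k t : ℕ) (hk : 2 ≤ k)
    (h : Fin t → Polynomial ℝ)
    (hdeg : ∀ j, (h j).natDegree = k) (hlead : ∀ j, 0 < (h j).leadingCoeff)
    (η c : ℝ) (hη : 0 < η) (hc : 1 < c) (lam : ℝ) (hlam : lam = 1 - 1 / k) :
    ∃ C > 0, ∃ P₀ : ℝ, ∀ P : ℝ, P₀ ≤ P →
      (Set.ncard {p : (Fin t → ℤ) × (Fin t → ℤ) |
        (∀ j : Fin t, (P ^ (lam ^ (j : ℕ)) < (p.1 j : ℝ) ∧ (p.1 j : ℝ) ≤ c * P ^ (lam ^ (j : ℕ))) ∧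
          (P ^ (lam ^ (j : ℕ)) < (p.2 j : ℝ) ∧ (p.2 j : ℝ) ≤ c * P ^ (lam ^ (j : ℕ)))) ∧
        |∑ j : Fin t, ((h j).eval (p.1 j : ℝ) - (h j).eval (p.2 j : ℝ))| < η} : ℝ)
      ≤ C * P ^ (∑ j : Fin t, lam ^ (j : ℕ)) := by
  obtain ⟨C, hC, hbound⟩ := exists_card_diagonalTuples_le hk hlam hη hc h hdeg hlead
  obtain ⟨P₀, hP₀⟩ := eventually_atTop.1 hbound
  refine ⟨C, hC, P₀, fun P hP => ?_⟩
  convert hP₀ P hP 0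
  rw [← Set.ncard_coe_finset]
  congr 1
  ext p
  rw [mem_coe, mem_diagonalTuples, zero_add]
  rfl

theorem stmt_12 (k t : ℕ) (hk : 2 ≤ k) (ht : 1 ≤ t)
    (h : Fin t → Polynomial ℝ)
    (hdeg : ∀ j, (h j).natDegree = k) (hlead : ∀ j, 0 < (h j).leadingCoeff)
    (η c : ℝ) (hη : 0 < η) (hc : 1 < c) (lam : ℝ) (hlam : lam = 1 - 1 / k) :
    ∃ C > 0, ∃ P₀ : ℝ, ∀ P : ℝ, P₀ ≤ P →
      (Set.ncard {p : (Fin t → ℤ) × (Fin t → ℤ) |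
        (∀ j : Fin t, (P ^ (lam ^ (j : ℕ)) < (p.1 j : ℝ) ∧ (p.1 j : ℝ) ≤ c * P ^ (lam ^ (j : ℕ))) ∧
          (P ^ (lam ^ (j : ℕ)) < (p.2 j : ℝ) ∧ (p.2 j : ℝ) ≤ c * P ^ (lam ^ (j : ℕ)))) ∧
        |∑ j : Fin t, ((h j).eval (p.1 j : ℝ) - (h j).eval (p.2 j : ℝ))| < η} : ℝ)
      ≤ C * P ^ (∑ j : Fin t, lam ^ (j : ℕ)) :=
  stmt_12_general k t hk h hdeg hlead η c hη hc lam hlam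
end

section
/- Let k ≥ 4, let v = σ(k−1) and λ = 1 − (1−v)/k. Suppose t ≥ 1 and 1 ≤ ℓ ≤ t satisfy t − ℓ ≥ k. Then, writing λ_j = λ^{j−1}, one has λ_ℓ · k/2 < λ_{ℓ+1} + λ_{ℓ+2} + ... + λ_t. -/
/-!
With `u = 1 - v` we have `1 - λ = u / k`, so summing the geometric series and dividing by
`λ^(ℓ-1)` turns the claim into `u / 2 < λ - λ^(t-ℓ+1)`. As `t - ℓ ≥ k` it suffices that
`λ^(k+1) < λ - u / 2`. For `4 ≤ k ≤ 8` this is a numerical check; for `k ≥ 9` we have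
`u ≥ 127/128` and `λ ≥ 8/9`, and `λ^k = (1 - u/k)^k ≤ exp (-u) < 7/16` is small enough.
-/

open Finset Real

lemma Finset.sum_Icc_add_one_sub_one {M : Type*} [AddCommMonoid M] (f : ℕ → M) (a b : ℕ) :
    ∑ j ∈ Icc (a + 1) b, f (j - 1) = ∑ i ∈ Ico a b, f i := by
  rw [← Ico_add_one_right_eq_Icc, ← sum_Ico_add']
  simp only [Nat.add_sub_cancel]

lemma pow_mul_div_two_lt_sum_Ico_pow {x c : ℝ} (hx0 : 0 < x) (hx1 : x < 1) {k m : ℕ}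
    (hkm : k ≤ m) (h : x ^ (k + 1) < x - c * (1 - x) / 2) (n : ℕ) :
    x ^ n * c / 2 < ∑ i ∈ Ico (n + 1) (n + 1 + m), x ^ i := by
  have htail : x ^ (m + 1) ≤ x ^ (k + 1) := pow_le_pow_of_le_one hx0.le hx1.le (by omega)
  have hsum : (∑ i ∈ Ico (n + 1) (n + 1 + m), x ^ i) * (1 - x) = x ^ n * (x - x ^ (m + 1)) := by
    rw [geom_sum_Ico_mul_neg x (Nat.le_add_right _ _)]
    ring
  refine lt_of_mul_lt_mul_right ?_ (sub_nonneg.2 hx1.le)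
  calc x ^ n * c / 2 * (1 - x) = x ^ n * (c * (1 - x) / 2) := by ring
    _ < x ^ n * (x - x ^ (m + 1)) := mul_lt_mul_of_pos_left (by linarith) (pow_pos hx0 n)
    _ = _ := hsum.symm

lemma two_le_sigmaInv {d : ℕ} (hd : 2 ≤ d) : 2 ≤ sigmaInv d := by
  unfold sigmaInv
  split_ifs with h
  · calc (2 : ℝ) = 2 ^ 1 := by norm_num
      _ ≤ 2 ^ (d - 1) := pow_le_pow_right₀ one_le_two (by omega)
  · have : (9 : ℝ) ≤ d := by exact_mod_cast not_le.mp h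
    nlinarith

lemma le_sigmaInv_of_eight_le {d : ℕ} (hd : 8 ≤ d) : 128 ≤ sigmaInv d := by
  unfold sigmaInv
  split_ifs with h
  · obtain rfl : d = 8 := le_antisymm h hd
    norm_num
  · have : (9 : ℝ) ≤ d := by exact_mod_cast not_le.mp h
    nlinarith

lemma sigmaWeyl_pos {d : ℕ} (hd : 2 ≤ d) : 0 < sigmaWeyl d :=
  inv_pos.2 (by linarith [two_le_sigmaInv hd])

lemma sigmaWeyl_lt_one {d : ℕ} (hd : 2 ≤ d) : sigmaWeyl d < 1 :=
  inv_lt_one_of_one_lt₀ (by linarith [two_le_sigmaInv hd])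

lemma sigmaWeyl_le_of_eight_le {d : ℕ} (hd : 8 ≤ d) : sigmaWeyl d ≤ 1 / 128 := by
  rw [sigmaWeyl, one_div]
  exact inv_anti₀ (by norm_num) (le_sigmaInv_of_eight_le hd)

lemma exp_neg_lt_seven_div_sixteen {u : ℝ} (hu : 127 / 128 ≤ u) : exp (-u) < 7 / 16 := by
  have h := quadratic_le_exp_of_nonneg (by linarith : (0 : ℝ) ≤ u)
  rw [exp_neg, inv_lt_comm₀ (exp_pos u) (by norm_num)]
  nlinarith

lemma one_sub_div_pow_succ_lt {k : ℕ} (hk : 9 ≤ k) {u : ℝ} (hu : 127 / 128 ≤ u) (hu1 : u ≤ 1) :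
    (1 - u / k) ^ (k + 1) < 1 - u / k - u / 2 := by
  have hkR : (9 : ℝ) ≤ k := by exact_mod_cast hk
  have hx : 8 / 9 ≤ 1 - u / k := by
    have : u / k ≤ 1 / 9 := by rw [div_le_iff₀ (by linarith)]; linarith
    linarith
  have hpow : (1 - u / k) ^ k < 7 / 16 :=
    (one_sub_div_pow_le_exp_neg (by linarith)).trans_lt (exp_neg_lt_seven_div_sixteen hu)
  rw [pow_succ]
  nlinarith

lemma one_sub_div_pow_succ_lt_of_sigmaWeyl {k : ℕ} (hk : 4 ≤ k) :
    (1 - (1 - sigmaWeyl (k - 1)) / k) ^ (k + 1) <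
      1 - (1 - sigmaWeyl (k - 1)) / k - (1 - sigmaWeyl (k - 1)) / 2 := by
  rcases le_or_gt k 8 with h8 | h9
  · interval_cases k <;> norm_num [sigmaWeyl, sigmaInv]
  · exact one_sub_div_pow_succ_lt h9
      (by linarith [sigmaWeyl_le_of_eight_le (d := k - 1) (by omega)])
      (by linarith [sigmaWeyl_pos (d := k - 1) (by omega)])

theorem stmt_16_general (k : ℕ) (hk : 4 ≤ k) (v lam : ℝ)
    (hv : v = sigmaWeyl (k - 1)) (hlam : lam = 1 - (1 - v) / k)
    (t ℓ : ℕ) (hℓ : 1 ≤ ℓ) (htℓ : k + ℓ ≤ t) :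
    lam ^ (ℓ - 1) * k / 2 < ∑ j ∈ Finset.Icc (ℓ + 1) t, lam ^ (j - 1) := by
  obtain ⟨n, rfl⟩ : ∃ n, ℓ = n + 1 := ⟨ℓ - 1, by omega⟩
  obtain ⟨m, rfl⟩ : ∃ m, t = n + 1 + m := ⟨t - (n + 1), by omega⟩
  have hkR : (4 : ℝ) ≤ k := by exact_mod_cast hk
  have hv0 : 0 < v := hv ▸ sigmaWeyl_pos (by omega)
  have hv1 : v < 1 := hv ▸ sigmaWeyl_lt_one (by omega)
  have hlam0 : 0 < lam := by rw [hlam, sub_pos, div_lt_one (by linarith)]; linarith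
  have hlam1 : lam < 1 := by rw [hlam, sub_lt_self_iff]; exact div_pos (by linarith) (by linarith)
  have hkey : lam ^ (k + 1) < lam - k * (1 - lam) / 2 := by
    have hu : k * (1 - lam) = 1 - v := by rw [hlam]; field_simp; ring
    rw [hu, hlam, hv]
    exact one_sub_div_pow_succ_lt_of_sigmaWeyl hk
  rw [Finset.sum_Icc_add_one_sub_one (lam ^ ·), Nat.add_sub_cancel]
  exact pow_mul_div_two_lt_sum_Ico_pow hlam0 hlam1 (by omega) hkey n

theorem stmt_16 (k : ℕ) (hk : 4 ≤ k) (v lam : ℝ)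
    (hv : v = sigmaWeyl (k - 1)) (hlam : lam = 1 - (1 - v) / k)
    (t ℓ : ℕ) (hℓ : 1 ≤ ℓ) (hℓt : ℓ ≤ t) (htℓ : k + ℓ ≤ t) :
    lam ^ (ℓ - 1) * k / 2 < ∑ j ∈ Finset.Icc (ℓ + 1) t, lam ^ (j - 1) :=
  stmt_16_general k hk v lam hv hlam t ℓ hℓ htℓ
end
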